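/- arXiv:1803.06849 — 5 statements merged into one kernel-verified Lean document; each statement's English description precedes it below -/
import Mathlib

section
/- If f is L-additive with part h_f, g_f is completely additive with f = g_f·h_f, and also f = g̃·h̃ with g̃ completely additive and h̃ completely multiplicative, and if f(p) ≠ 0 and h_f(p) ≠ 0 for all primes p, then h̃(p) = h_f(p) and g̃(p) = g_f(p) for all primes p. -/
/-!
Both the Leibniz rule for `f` and a factorization `f = g·h` compute `f(n²) = 2 f(n) h(n)`,
with the respective multiplicative `h`. Hence `f(p) ≠ 0` pins down `h(p)`, after which
`h_f(p) ≠ 0` pins down `g(p)` from `f(p) = g(p) h(p)`.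
-/

def CompletelyMultiplicative (h : ℕ → ℚ) : Prop :=
  h 1 = 1 ∧ ∀ m n : ℕ, 0 < m → 0 < n → h (m * n) = h m * h n

def CompletelyAdditive (g : ℕ → ℚ) : Prop :=
  ∀ m n : ℕ, 0 < m → 0 < n → g (m * n) = g m + g n

def LeibnizAdditive (f h : ℕ → ℚ) : Prop :=
  CompletelyMultiplicative h ∧
  ∀ m n : ℕ, 0 < m → 0 < n → f (m * n) = f m * h n + f n * h m

variable {f g h h' : ℕ → ℚ} {n : ℕ}

theorem LeibnizAdditive.apply_mul_self (hL : LeibnizAdditive f h) (hn : 0 < n) :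
    f (n * n) = 2 * (f n * h n) := by
  rw [hL.2 n n hn hn]
  ring

theorem apply_mul_self_of_eq_mul (hg : CompletelyAdditive g) (hh : CompletelyMultiplicative h)
    (hfac : ∀ n : ℕ, 0 < n → f n = g n * h n) (hn : 0 < n) :
    f (n * n) = 2 * (f n * h n) := by
  rw [hfac (n * n) (Nat.mul_pos hn hn), hg n n hn hn, hh.2 n n hn hn, hfac n hn]
  ring

theorem LeibnizAdditive.apply_eq_of_eq_mul (hL : LeibnizAdditive f h)
    (hg : CompletelyAdditive g) (hh' : CompletelyMultiplicative h')
    (hfac : ∀ n : ℕ, 0 < n → f n = g n * h' n) (hn : 0 < n) (hfn : f n ≠ 0) :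
    h' n = h n := by
  have hsq : 2 * (f n * h' n) = 2 * (f n * h n) :=
    (apply_mul_self_of_eq_mul hg hh' hfac hn).symm.trans (hL.apply_mul_self hn)
  exact mul_left_cancel₀ hfn (mul_left_cancel₀ two_ne_zero hsq)

theorem stmt_5_general (f gf hf gt ht : ℕ → ℚ)
    (hLa : LeibnizAdditive f hf)
    (hfac : ∀ n : ℕ, 0 < n → f n = gf n * hf n)
    (hgt : CompletelyAdditive gt) (hht : CompletelyMultiplicative ht)
    (hfac' : ∀ n : ℕ, 0 < n → f n = gt n * ht n)
    (hne : ∀ p : ℕ, p.Prime → f p ≠ 0 ∧ hf p ≠ 0) :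
    ∀ p : ℕ, p.Prime → ht p = hf p ∧ gt p = gf p := by
  intro p hp
  obtain ⟨hfp, hhfp⟩ := hne p hp
  have hhtp : ht p = hf p := hLa.apply_eq_of_eq_mul hgt hht hfac' hp.pos hfp
  refine ⟨hhtp, mul_right_cancel₀ hhfp ?_⟩
  calc gt p * hf p = f p := by rw [← hhtp, hfac' p hp.pos]
    _ = gf p * hf p := hfac p hp.pos

theorem stmt_5 (f gf hf gt ht : ℕ → ℚ)
    (hLa : LeibnizAdditive f hf)
    (hgf : CompletelyAdditive gf) (hfac : ∀ n : ℕ, 0 < n → f n = gf n * hf n)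
    (hgt : CompletelyAdditive gt) (hht : CompletelyMultiplicative ht)
    (hfac' : ∀ n : ℕ, 0 < n → f n = gt n * ht n)
    (hne : ∀ p : ℕ, p.Prime → f p ≠ 0 ∧ hf p ≠ 0) :
    ∀ p : ℕ, p.Prime → ht p = hf p ∧ gt p = gf p :=
  stmt_5_general f gf hf gt ht hLa hfac hgt hht hfac' hne
end

section
/- Let f be L-additive with completely multiplicative part h_f such that h_f is nonzero at all primes dividing n, and let n = p_1^{n_1} ⋯ p_s^{n_s} with p_i distinct primes. Then f(n) = h_f(n) · Σ_{i=1}^s n_i f(p_i)/h_f(p_i). -/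
/-!
Wherever `h` does not vanish, the Leibniz rule `f (m n) = f m h n + f n h m` says exactly that
the quotient `f / h` is additive: `f (m n) / h (m n) = f m / h m + f n / h n`. Since `h` is
nonzero at the primes dividing `n`, it is nonzero at every divisor of `n`, so `f / h` is
additive along the factorization of `n`, giving `f n / h n = ∑ₚ vₚ(n) f p / h p`.
-/

namespace LeibnizAdditive

variable {f h : ℕ → ℚ}

theorem map_one (hf : LeibnizAdditive f h) : f 1 = 0 := by
  have h11 := hf.2 1 1 one_pos one_pos
  rw [hf.1.1] at h11
  linarith

theorem div_mul {m n : ℕ} (hf : LeibnizAdditive f h) (hm : 0 < m) (hn : 0 < n)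
    (hhm : h m ≠ 0) (hhn : h n ≠ 0) :
    f (m * n) / h (m * n) = f m / h m + f n / h n := by
  rw [hf.2 m n hm hn, hf.1.2 m n hm hn]
  field_simp

theorem div_eq_factorization_sum (hf : LeibnizAdditive f h) {n : ℕ} (hn : 0 < n)
    (hne : ∀ p ∈ n.primeFactors, h p ≠ 0) :
    h n ≠ 0 ∧ f n / h n = n.factorization.sum fun p k => (k : ℚ) * f p / h p := by
  induction n using Nat.recOnMul with
  | zero => exact absurd hn (lt_irrefl 0)
  | one => simp [hf.1.1, hf.map_one]
  | prime p hp =>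
    refine ⟨hne p (hp.primeFactors ▸ Finset.mem_singleton_self p), ?_⟩
    simp [hp.factorization]
  | mul a b iha ihb =>
    have ha : 0 < a := Nat.pos_of_mul_pos_right hn
    have hb : 0 < b := Nat.pos_of_mul_pos_left hn
    rw [Nat.primeFactors_mul ha.ne' hb.ne'] at hne
    obtain ⟨hha, hfa⟩ := iha ha fun p hp => hne p (Finset.mem_union_left _ hp)
    obtain ⟨hhb, hfb⟩ := ihb hb fun p hp => hne p (Finset.mem_union_right _ hp)
    refine ⟨hf.1.2 a b ha hb ▸ mul_ne_zero hha hhb, ?_⟩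
    rw [hf.div_mul ha hb hha hhb, hfa, hfb, Nat.factorization_mul ha.ne' hb.ne',
      Finsupp.sum_add_index' (by simp) (fun p k₁ k₂ => by push_cast; ring)]

end LeibnizAdditive

theorem stmt_7 (f h : ℕ → ℚ) (hf : LeibnizAdditive f h)
    (n : ℕ) (hn : 0 < n) (hne : ∀ p ∈ n.primeFactors, h p ≠ 0) :
    f n = h n * ∑ p ∈ n.primeFactors, (n.factorization p : ℚ) * f p / h p := by
  obtain ⟨hhn, hdiv⟩ := hf.div_eq_factorization_sum hn hne
  rw [mul_comm, ← div_eq_iff hhn, hdiv, Finsupp.sum, Nat.support_factorization]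
end

section
/- An arithmetic function f is completely additive if and only if f·(u∗v) = (f·u)∗v + u∗(f·v) for all arithmetic functions u, v, where ∗ denotes Dirichlet convolution and · denotes pointwise product. -/
/-- Dirichlet convolution of two `ℚ`-valued arithmetic functions. -/
def dconv (u v : ℕ → ℚ) : ℕ → ℚ :=
  fun n => ∑ x ∈ n.divisorsAntidiagonal, u x.1 * v x.2

/-!
If `f` is completely additive then `f n = f a + f b` for every factorisation `n = a b`, which is
the Leibniz rule term by term. Conversely, testing the rule on the point masses `u = δ_m`,
`v = δ_n` at `m n` leaves only the term `(m, n)` of each convolution, giving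
`f (m n) = f m + f n`.
-/

lemma CompletelyAdditive.apply_eq_add_of_mem_divisorsAntidiagonal {f : ℕ → ℚ}
    (hf : CompletelyAdditive f) {n : ℕ} {x : ℕ × ℕ} (hx : x ∈ n.divisorsAntidiagonal) :
    f n = f x.1 + f x.2 := by
  obtain ⟨rfl, hn⟩ := Nat.mem_divisorsAntidiagonal.mp hx
  exact hf _ _ (Nat.pos_of_ne_zero (left_ne_zero_of_mul hn))
    (Nat.pos_of_ne_zero (right_ne_zero_of_mul hn))

lemma CompletelyAdditive.mul_dconv {f : ℕ → ℚ} (hf : CompletelyAdditive f) (u v : ℕ → ℚ)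
    (n : ℕ) :
    f n * dconv u v n =
      dconv (fun k => f k * u k) v n + dconv u (fun k => f k * v k) n := by
  simp only [dconv, Finset.mul_sum, ← Finset.sum_add_distrib]
  refine Finset.sum_congr rfl fun x hx => ?_
  rw [hf.apply_eq_add_of_mem_divisorsAntidiagonal hx]
  ring

lemma mul_single_eq_single (f : ℕ → ℚ) (m : ℕ) (a : ℚ) :
    (fun k => f k * (Pi.single m a : ℕ → ℚ) k) = Pi.single m (f m * a) := by
  funext k
  by_cases hk : k = m
  · subst hk; simp
  · simp [hk]

lemma dconv_single_single {m n : ℕ} (hm : 0 < m) (hn : 0 < n) (a b : ℚ) :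
    dconv (Pi.single m a) (Pi.single n b) (m * n) = a * b := by
  rw [dconv, Finset.sum_eq_single (m, n)]
  · simp
  · rintro ⟨x, y⟩ - hxy
    by_cases hx : x = m
    · have hy : y ≠ n := fun hy => hxy (by rw [hx, hy])
      simp [hy]
    · simp [hx]
  · simp [hm.ne', hn.ne']

theorem stmt_15 (f : ℕ → ℚ) :
    CompletelyAdditive f ↔
    ∀ u v : ℕ → ℚ, ∀ n : ℕ,
      f n * dconv u v n =
        dconv (fun k => f k * u k) v n + dconv u (fun k => f k * v k) n := by
  refine ⟨fun hf => hf.mul_dconv, fun H m n hm hn => ?_⟩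
  simpa only [mul_single_eq_single, dconv_single_single hm hn, mul_one, one_mul] using
    H (Pi.single m 1) (Pi.single n 1) (m * n)
end

section
/- If f is L-additive with completely multiplicative part h_f which is nonzero-valued, then f·(u∗v) = (f·u)∗(h_f·v) + (h_f·u)∗(f·v) for all arithmetic functions u, v. -/
theorem mul_dconv_of_leibniz_rule {f h : ℕ → ℚ}
    (hf : ∀ m n : ℕ, 0 < m → 0 < n → f (m * n) = f m * h n + f n * h m)
    (u v : ℕ → ℚ) (n : ℕ) :
    f n * dconv u v n =
      dconv (fun k => f k * u k) (fun k => h k * v k) n +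
      dconv (fun k => h k * u k) (fun k => f k * v k) n := by
  simp only [dconv, Finset.mul_sum, ← Finset.sum_add_distrib]
  refine Finset.sum_congr rfl fun x hx => ?_
  obtain ⟨rfl, hn⟩ := Nat.mem_divisorsAntidiagonal.mp hx
  rw [hf x.1 x.2 (Nat.pos_of_ne_zero (left_ne_zero_of_mul hn))
    (Nat.pos_of_ne_zero (right_ne_zero_of_mul hn))]
  ring

theorem stmt_17_general (f h : ℕ → ℚ) (hLa : LeibnizAdditive f h) :
    ∀ u v : ℕ → ℚ, ∀ n : ℕ,
      f n * dconv u v n =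
        dconv (fun k => f k * u k) (fun k => h k * v k) n +
        dconv (fun k => h k * u k) (fun k => f k * v k) n :=
  mul_dconv_of_leibniz_rule hLa.2

theorem stmt_17 (f h : ℕ → ℚ) (hLa : LeibnizAdditive f h)
    (hne : ∀ n : ℕ, 0 < n → h n ≠ 0) :
    ∀ u v : ℕ → ℚ, ∀ n : ℕ,
      f n * dconv u v n =
        dconv (fun k => f k * u k) (fun k => h k * v k) n +
        dconv (fun k => h k * u k) (fun k => f k * v k) n :=
  stmt_17_general f h hLa
end

section
/- If f is L-additive with nonzero-valued completely multiplicative part h_f, then f·τ = 2(f∗h_f), where τ is the number-of-divisors function; in particular D·τ = 2(D∗N) for the arithmetic derivative D and N(n)=n. -/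
open Finset

theorem Nat.card_divisorsAntidiagonal (n : ℕ) :
    #n.divisorsAntidiagonal = #n.divisors := by
  rw [← Nat.map_div_right_divisors, card_map]

theorem sum_divisorsAntidiagonal_swap_eq_dconv (u v : ℕ → ℚ) (n : ℕ) :
    ∑ x ∈ n.divisorsAntidiagonal, u x.2 * v x.1 = dconv u v n := by
  rw [← Nat.map_swap_divisorsAntidiagonal, sum_map]
  rfl

theorem mul_card_divisors_eq_two_mul_dconv {f h : ℕ → ℚ}
    (hfh : ∀ m n : ℕ, 0 < m → 0 < n → f (m * n) = f m * h n + f n * h m) (n : ℕ) :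
    f n * (#n.divisors : ℚ) = 2 * dconv f h n := calc
  f n * (#n.divisors : ℚ) = ∑ _x ∈ n.divisorsAntidiagonal, f n := by
    rw [sum_const, nsmul_eq_mul, Nat.card_divisorsAntidiagonal, mul_comm]
  _ = ∑ x ∈ n.divisorsAntidiagonal, (f x.1 * h x.2 + f x.2 * h x.1) := by
    refine sum_congr rfl fun x hx => ?_
    obtain ⟨rfl, hn⟩ := Nat.mem_divisorsAntidiagonal.1 hx
    exact hfh _ _ (Nat.pos_of_ne_zero (left_ne_zero_of_mul hn))
      (Nat.pos_of_ne_zero (right_ne_zero_of_mul hn))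
  _ = 2 * dconv f h n := by
    rw [sum_add_distrib, sum_divisorsAntidiagonal_swap_eq_dconv, dconv, two_mul]

theorem stmt_19_general (f h : ℕ → ℚ) (hLa : LeibnizAdditive f h)
    (D : ℕ → ℕ)
    (hDL : ∀ m n : ℕ, 0 < m → 0 < n → D (m * n) = m * D n + D m * n) :
    (∀ n : ℕ, f n * (n.divisors.card : ℚ) = 2 * dconv f h n) ∧
    (∀ n : ℕ, (D n : ℚ) * (n.divisors.card : ℚ) =
      2 * dconv (fun k => (D k : ℚ)) (fun k => (k : ℚ)) n) := by
  refine ⟨mul_card_divisors_eq_two_mul_dconv hLa.2,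
    mul_card_divisors_eq_two_mul_dconv fun m n hm hn => ?_⟩
  push_cast [hDL m n hm hn]
  ring

theorem stmt_19 (f h : ℕ → ℚ) (hLa : LeibnizAdditive f h)
    (hne : ∀ n : ℕ, 0 < n → h n ≠ 0)
    (D : ℕ → ℕ) (h1 : D 1 = 0)
    (hp : ∀ p : ℕ, p.Prime → D p = 1)
    (hDL : ∀ m n : ℕ, 0 < m → 0 < n → D (m * n) = m * D n + D m * n) :
    (∀ n : ℕ, f n * (n.divisors.card : ℚ) = 2 * dconv f h n) ∧
    (∀ n : ℕ, (D n : ℚ) * (n.divisors.card : ℚ) =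
      2 * dconv (fun k => (D k : ℚ)) (fun k => (k : ℚ)) n) :=
  stmt_19_general f h hLa D hDL
end
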